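/- arXiv:2501.13345 — 3 statements merged into one kernel-verified Lean document; each statement's English description precedes it below -/
import Mathlib

section
/- If the map p ↦ ∑_{i=1}^n p_i W_i takes a positive definite value at some point of the standard simplex, then the function p ↦ -log det(∑ p_i W_i) attains a minimum on the set {p ∈ Δ : ∑ p_i W_i ≻ 0}. -/
/-!
The determinant of `∑ i, p i • W i` is continuous in `p`, so it attains its maximum on the compact
simplex. That maximum is at least the (positive) determinant at the feasible point; a positive
semidefinite matrix with nonzero determinant is positive definite, so the maximizer is feasible,
and since `-log` is antitone it minimizes `-log det` over the feasible set.
-/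

open Matrix

section WeightedSum

variable {ι m : Type*} [Fintype ι] {W : ι → Matrix m m ℝ}

lemma posSemidef_sum_smul (hW : ∀ i, (W i).PosSemidef) {p : ι → ℝ} (hp : 0 ≤ p) :
    (∑ i, p i • W i).PosSemidef :=
  posSemidef_sum _ fun i _ => (hW i).smul (hp i)

variable [Fintype m] [DecidableEq m]

lemma continuous_det_sum_smul (W : ι → Matrix m m ℝ) :
    Continuous fun p : ι → ℝ => (∑ i, p i • W i).det :=
  (continuous_finsetSum _ fun i _ => (continuous_apply i).smul continuous_const).matrix_det

lemma exists_posDef_isMaxOn_det_sum_smul (hW : ∀ i, (W i).PosSemidef)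
    (hfeas : ∃ p ∈ stdSimplex ℝ ι, (∑ i, p i • W i).PosDef) :
    ∃ p ∈ stdSimplex ℝ ι, (∑ i, p i • W i).PosDef ∧
      IsMaxOn (fun q : ι → ℝ => (∑ i, q i • W i).det) (stdSimplex ℝ ι) p := by
  obtain ⟨p₀, hp₀, hPD₀⟩ := hfeas
  obtain ⟨p, hp, hmax⟩ := (isCompact_stdSimplex ℝ ι).exists_isMaxOn ⟨p₀, hp₀⟩
    (continuous_det_sum_smul W).continuousOn
  have hdet : 0 < (∑ i, p i • W i).det := hPD₀.det_pos.trans_le (hmax hp₀)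
  exact ⟨p, hp, (posSemidef_sum_smul hW hp.1).posDef_iff_det_ne_zero.mpr hdet.ne', hmax⟩

end WeightedSum

/-- If `p ↦ ∑ i, p i • W i` is positive definite at some point of the standard simplex, then
`p ↦ -log det (∑ i, p i • W i)` attains a minimum on `{p ∈ Δ | ∑ i, p i • W i ≻ 0}`. -/
theorem exists_min_neg_log_det (n : ℕ) (W : Fin n → Matrix (Fin n) (Fin n) ℝ)
    (hW : ∀ i, (W i).PosSemidef)
    (hfeas : ∃ p ∈ stdSimplex ℝ (Fin n), (∑ i, p i • W i).PosDef) :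
    ∃ p ∈ {p : Fin n → ℝ | p ∈ stdSimplex ℝ (Fin n) ∧ (∑ i, p i • W i).PosDef},
      ∀ q ∈ {p : Fin n → ℝ | p ∈ stdSimplex ℝ (Fin n) ∧ (∑ i, p i • W i).PosDef},
        -Real.log (∑ i, p i • W i).det ≤ -Real.log (∑ i, q i • W i).det := by
  obtain ⟨p, hp, hPD, hmax⟩ := exists_posDef_isMaxOn_det_sum_smul hW hfeas
  refine ⟨p, ⟨hp, hPD⟩, ?_⟩
  rintro q ⟨hq, hqPD⟩
  exact neg_le_neg (Real.log_le_log hqPD.det_pos (hmax hq))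
end

section
/- Under the hypotheses of the parametric minimization theorem above, if additionally argmin_p f(p, q̄) = {p̄} is a singleton, then p_k → p̄. -/
open Filter

/-- Under the hypotheses of the parametric minimization theorem, if additionally the argmin of
`f (·, q̄)` is the singleton `{p̄}`, then `p k → p̄`. -/
theorem parametric_min_tendsto (n m : ℕ) (f : (Fin n → ℝ) × (Fin m → ℝ) → EReal)
    (hproper : ∃ x, f x ≠ ⊤) (hnotbot : ∀ x, f x ≠ ⊥)
    (hlsc : ∀ α : ℝ, IsClosed {x | f x ≤ (α : EReal)})
    (hlb : ∀ (q' : Fin m → ℝ) (α : ℝ), ∃ V ∈ nhds q', ∃ B : Set (Fin n → ℝ),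
      Bornology.IsBounded B ∧ ∀ q ∈ V, {p | f (p, q) ≤ (α : EReal)} ⊆ B)
    (p : ℕ → Fin n → ℝ) (q : ℕ → Fin m → ℝ) (qbar : Fin m → ℝ)
    (hmin : ∀ k, ∀ p', f (p k, q k) ≤ f (p', q k))
    (hq : Tendsto q atTop (nhds qbar))
    (pbar : Fin n → ℝ)
    (hsingle : {x : Fin n → ℝ | ∀ p', f (x, qbar) ≤ f (p', qbar)} = {pbar})
    (hcont : ContinuousAt (fun q' => f (pbar, q')) qbar) :
    Tendsto p atTop (nhds pbar) := by
  have hpbar_min : ∀ p', f (pbar, qbar) ≤ f (p', qbar) := by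
    have h : pbar ∈ ({pbar} : Set (Fin n → ℝ)) := rfl
    rw [← hsingle] at h
    exact h
  by_cases htop : f (pbar, qbar) = ⊤
  · -- degenerate case : every point is a minimizer, hence equals pbar
    have hall : ∀ x : Fin n → ℝ, x = pbar := by
      intro x
      have hx : x ∈ {x : Fin n → ℝ | ∀ p', f (x, qbar) ≤ f (p', qbar)} := by
        intro p'
        have h1 : f (p', qbar) = ⊤ := top_le_iff.mp (htop ▸ hpbar_min p')
        rw [h1]; exact le_top
      rw [hsingle] at hx
      exact hx
    have hp : p = fun _ => pbar := funext fun k => hall (p k)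
    rw [hp]
    exact tendsto_const_nhds
  · -- main case
    have hcoe : ((f (pbar, qbar)).toReal : EReal) = f (pbar, qbar) :=
      EReal.coe_toReal htop (hnotbot _)
    have htend : Tendsto (fun k => f (pbar, q k)) atTop (nhds (f (pbar, qbar))) :=
      (hcont.tendsto).comp hq
    -- for any real β above the optimal value, eventually f (p k, q k) ≤ β
    have haux : ∀ β : ℝ, f (pbar, qbar) < (β : EReal) →
        ∀ᶠ k in atTop, f (p k, q k) ≤ (β : EReal) := by
      intro β hβ
      filter_upwards [htend.eventually_lt_const hβ] with k hk
      exact le_trans (hmin k pbar) hk.le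
    set a : ℝ := (f (pbar, qbar)).toReal + 1 with ha
    have halt : f (pbar, qbar) < (a : EReal) := by
      rw [← hcoe, ha]
      exact_mod_cast lt_add_one _
    obtain ⟨V, hV, B, hB, hsub⟩ := hlb qbar a
    have hev : ∀ᶠ k in atTop, p k ∈ B := by
      filter_upwards [haux a halt, hq.eventually_mem hV] with k h1 h2
      exact hsub (q k) h2 h1
    -- it suffices that every subsequence has a further subsequence tending to pbar
    apply tendsto_of_subseq_tendsto
    intro ns hns
    have hfreq : ∃ᶠ i in atTop, p (ns i) ∈ B :=
      ((hns.eventually hev).mono fun i hi => hi).frequently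
    obtain ⟨pt, hptB, φ, hφ, hφt⟩ := tendsto_subseq_of_frequently_bounded hB hfreq
    -- the limit pt of the subsequence is a minimizer, hence equals pbar
    have hqt : Tendsto (fun i => q (ns (φ i))) atTop (nhds qbar) :=
      hq.comp (hns.comp hφ.tendsto_atTop)
    have hxt : Tendsto (fun i => ((p (ns (φ i)), q (ns (φ i))) :
        (Fin n → ℝ) × (Fin m → ℝ))) atTop (nhds (pt, qbar)) :=
      hφt.prodMk_nhds hqt
    have hle : f (pt, qbar) ≤ f (pbar, qbar) := by
      by_contra hlt
      push_neg at hlt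
      obtain ⟨β, hβ1, hβ2⟩ := EReal.lt_iff_exists_real_btwn.mp hlt
      have hmem : ∀ᶠ i in atTop,
          ((p (ns (φ i)), q (ns (φ i))) : (Fin n → ℝ) × (Fin m → ℝ)) ∈
            {x | f x ≤ (β : EReal)} := by
        have := haux β hβ1
        exact (hns.comp hφ.tendsto_atTop).eventually this
      have hcl : (pt, qbar) ∈ {x | f x ≤ (β : EReal)} :=
        (hlsc β).mem_of_tendsto hxt hmem
      exact absurd hcl (not_le.mpr hβ2)
    have hmem : pt ∈ {x : Fin n → ℝ | ∀ p', f (x, qbar) ≤ f (p', qbar)} :=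
      fun p' => le_trans hle (hpbar_min p')
    rw [hsingle] at hmem
    exact ⟨φ, hmem ▸ hφt⟩
end

section
/- If A : [a,b] → ℝ^{n×n} is continuous and real analytic on (a,b), then for each fixed τ ∈ [a,b] the state transition matrix t ↦ Φ(t,τ), defined by ∂_t Φ(t,τ) = A(t)Φ(t,τ) with Φ(τ,τ) = I, is real analytic on (a,b). -/
/-!
Near a point `t₀` where `A(t₀ + y) = ∑ bⱼ yʲ`, the equation `X' = A X` determines the Taylor
coefficients of a solution recursively by `(k + 1) c_{k+1} = ∑_{i+j=k} bᵢ cⱼ`, `c₀ = X(t₀)`.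
In a Banach algebra the factor `(k + 1)⁻¹` exactly compensates the `k + 1` terms of the
convolution, so geometric bounds `‖bⱼ‖ ≤ C σʲ` (with `C ≤ σ`) propagate to `‖c_k‖ ≤ ‖c₀‖ σᵏ`.
Hence `∑ c_k yᵏ` has positive radius of convergence, and comparing coefficients shows that it
solves the equation; by uniqueness of solutions of Lipschitz ODEs it agrees with `X` near `t₀`.
Matrices are handled by transporting the equation to the operator algebra of Euclidean space,
since the entrywise sup norm is not submultiplicative.
-/

open Matrix

attribute [local instance] Matrix.normedAddCommGroup Matrix.normedSpace

open Filter Topology Finset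

section LinearODE

variable {R : Type*} [NormedRing R] [NormedAlgebra ℝ R]

theorem eventuallyEq_of_hasDerivAt_mul {A X Y : ℝ → R} {t₀ : ℝ} (hA : ContinuousAt A t₀)
    (hX : ∀ᶠ t in 𝓝 t₀, HasDerivAt X (A t * X t) t)
    (hY : ∀ᶠ t in 𝓝 t₀, HasDerivAt Y (A t * Y t) t) (h₀ : X t₀ = Y t₀) : X =ᶠ[𝓝 t₀] Y := by
  have hbound : ∀ᶠ t in 𝓝 t₀, ‖A t‖ < ‖A t₀‖ + 1 :=
    hA.norm.eventually (gt_mem_nhds (lt_add_one _))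
  refine ODE_solution_unique_of_eventually (v := fun t x => A t * x) (s := fun _ => Set.univ)
    (K := ‖A t₀‖₊ + 1) ?_ (hX.mono fun t h => ⟨h, trivial⟩) (hY.mono fun t h => ⟨h, trivial⟩) h₀
  filter_upwards [hbound] with t ht
  refine (LipschitzWith.of_dist_le_mul fun x z => ?_).lipschitzOnWith
  rw [dist_eq_norm, dist_eq_norm, ← mul_sub]
  exact (norm_mul_le _ _).trans (by gcongr; exact_mod_cast ht.le)

noncomputable def linearODECoeff (b : ℕ → R) (x₀ : R) : ℕ → R
  | 0 => x₀
  | k + 1 => ((k : ℝ) + 1)⁻¹ • ∑ j ∈ range (k + 1), b j * linearODECoeff b x₀ (k - j)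
  decreasing_by omega

section Coeff

variable {b : ℕ → R} {x₀ : R}

@[simp]
theorem linearODECoeff_zero : linearODECoeff b x₀ 0 = x₀ := by
  rw [linearODECoeff]

theorem linearODECoeff_succ (k : ℕ) :
    ((k : ℝ) + 1) • linearODECoeff b x₀ (k + 1) =
      ∑ ij ∈ antidiagonal k, b ij.1 * linearODECoeff b x₀ ij.2 := by
  rw [linearODECoeff, smul_smul, mul_inv_cancel₀ (by positivity), one_smul,
    Nat.sum_antidiagonal_eq_sum_range_succ_mk]

theorem norm_linearODECoeff_le {C σ : ℝ} (hb : ∀ j, ‖b j‖ ≤ C * σ ^ j) (hCσ : C ≤ σ) (k : ℕ) :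
    ‖linearODECoeff b x₀ k‖ ≤ ‖x₀‖ * σ ^ k := by
  have hσ : 0 ≤ σ := ((norm_nonneg _).trans (hb 0)).trans (by simpa using hCσ)
  induction k using Nat.strong_induction_on with
  | _ k ih =>
    rcases k with _ | k
    · simp
    have hterm : ∀ ij ∈ antidiagonal k,
        ‖b ij.1 * linearODECoeff b x₀ ij.2‖ ≤ C * ‖x₀‖ * σ ^ k := fun ij hij => by
      rw [← mem_antidiagonal.1 hij]
      calc ‖b ij.1 * linearODECoeff b x₀ ij.2‖
          ≤ ‖b ij.1‖ * ‖linearODECoeff b x₀ ij.2‖ := norm_mul_le _ _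
        _ ≤ C * σ ^ ij.1 * (‖x₀‖ * σ ^ ij.2) :=
          mul_le_mul (hb _) (ih _ (Nat.antidiagonal.snd_lt hij)) (norm_nonneg _)
            ((norm_nonneg _).trans (hb _))
        _ = C * ‖x₀‖ * σ ^ (ij.1 + ij.2) := by ring
    have hsum := (norm_sum_le _ _).trans (sum_le_sum hterm)
    rw [← linearODECoeff_succ, norm_smul, Real.norm_of_nonneg (by positivity), sum_const,
      Nat.card_antidiagonal, nsmul_eq_mul, Nat.cast_succ] at hsum
    calc ‖linearODECoeff b x₀ (k + 1)‖ ≤ C * ‖x₀‖ * σ ^ k :=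
          le_of_mul_le_mul_left hsum (by positivity)
      _ ≤ σ * ‖x₀‖ * σ ^ k := by gcongr
      _ = ‖x₀‖ * σ ^ (k + 1) := by ring

end Coeff

noncomputable def linearODESeries (p : FormalMultilinearSeries ℝ ℝ R) (x₀ : R) :
    FormalMultilinearSeries ℝ ℝ R :=
  fun k => ContinuousMultilinearMap.mkPiRing ℝ (Fin k) (linearODECoeff p.coeff x₀ k)

section Series

variable (p : FormalMultilinearSeries ℝ ℝ R) (x₀ : R)

@[simp]
theorem linearODESeries_coeff (k : ℕ) :
    (linearODESeries p x₀).coeff k = linearODECoeff p.coeff x₀ k := by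
  simp [linearODESeries, FormalMultilinearSeries.coeff]

theorem linearODESeries_sum_zero : (linearODESeries p x₀).sum 0 = x₀ := by
  rw [FormalMultilinearSeries.sum, tsum_eq_single 0 fun k hk => by simp [hk]]
  simp

theorem linearODESeries_radius_pos (hp : 0 < p.radius) : 0 < (linearODESeries p x₀).radius := by
  obtain ⟨C, r, hC, hr, hpC⟩ := p.le_mul_pow_of_radius_pos hp
  set σ : NNReal := ⟨max C r, hC.le.trans (le_max_left _ _)⟩
  have hσ : (0 : ℝ) < σ := hC.trans_le (le_max_left _ _)
  have hb (j : ℕ) : ‖p.coeff j‖ ≤ C * (σ : ℝ) ^ j := by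
    rw [← FormalMultilinearSeries.norm_apply_eq_norm_coef]
    exact (hpC j).trans (by gcongr; exact le_max_right _ _)
  refine lt_of_lt_of_le ?_ ((linearODESeries p x₀).le_radius_of_bound ‖x₀‖ (r := σ⁻¹) fun k => ?_)
  · simpa using hσ
  rw [FormalMultilinearSeries.norm_apply_eq_norm_coef, linearODESeries_coeff]
  calc ‖linearODECoeff p.coeff x₀ k‖ * ((σ⁻¹ : NNReal) : ℝ) ^ k
      ≤ ‖x₀‖ * (σ : ℝ) ^ k * ((σ : ℝ)⁻¹) ^ k := by
        push_cast
        gcongr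
        exact norm_linearODECoeff_le hb (le_max_left _ _) k
    _ = ‖x₀‖ := by rw [mul_assoc, ← mul_pow, mul_inv_cancel₀ hσ.ne', one_pow, mul_one]

theorem hasDerivAt_linearODESeries_sum [CompleteSpace R] {y : ℝ} (hp : ‖y‖ₑ < p.radius)
    (hq : ‖y‖ₑ < (linearODESeries p x₀).radius) :
    HasDerivAt (linearODESeries p x₀).sum (p.sum y * (linearODESeries p x₀).sum y) y := by
  set q := linearODESeries p x₀
  set c := linearODECoeff p.coeff x₀
  have hderiv : HasSum (fun k : ℕ => y ^ k • (((k : ℝ) + 1) • c (k + 1)))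
      (q.derivSeries.sum y 1) := by
    have := (q.derivSeries.hasSum (x := y)
      (by simpa using hq.trans_le q.radius_le_radius_derivSeries)).mapL
      (ContinuousLinearMap.apply ℝ R 1)
    simp only [ContinuousLinearMap.apply_apply, FormalMultilinearSeries.apply_eq_pow_smul_coeff,
      _root_.smul_apply, FormalMultilinearSeries.derivSeries_coeff_one,
      linearODESeries_coeff, ← Nat.cast_smul_eq_nsmul ℝ, Nat.cast_succ, q] at this
    exact this
  have hprod : HasSum (fun k : ℕ => y ^ k • (((k : ℝ) + 1) • c (k + 1)))
      (p.sum y * q.sum y) := by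
    have hf := p.summable_norm_apply (x := y) (by simpa using hp)
    have hg := q.summable_norm_apply (x := y) (by simpa using hq)
    simp only [FormalMultilinearSeries.apply_eq_pow_smul_coeff, linearODESeries_coeff, q] at hf hg
    have hcauchy := (summable_norm_sum_mul_antidiagonal_of_summable_norm hf hg).of_norm.hasSum
    rw [← tsum_mul_tsum_eq_tsum_sum_antidiagonal_of_summable_norm hf hg] at hcauchy
    have hterm (k : ℕ) : y ^ k • (((k : ℝ) + 1) • c (k + 1)) =
        ∑ ij ∈ antidiagonal k, (y ^ ij.1 • p.coeff ij.1) * (y ^ ij.2 • c ij.2) := by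
      rw [linearODECoeff_succ, smul_sum]
      refine sum_congr rfl fun ij hij => ?_
      rw [smul_mul_smul_comm, ← pow_add, mem_antidiagonal.1 hij]
    simp only [hterm, FormalMultilinearSeries.sum, FormalMultilinearSeries.apply_eq_pow_smul_coeff,
      linearODESeries_coeff, q, c]
    exact hcauchy
  exact (q.hasFDerivAt_sum hq).hasDerivAt.congr_deriv (hderiv.unique hprod)

end Series

theorem analyticAt_of_hasDerivAt_mul [CompleteSpace R] {A X : ℝ → R} {t₀ : ℝ}
    (hA : AnalyticAt ℝ A t₀) (hX : ∀ᶠ t in 𝓝 t₀, HasDerivAt X (A t * X t) t) :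
    AnalyticAt ℝ X t₀ := by
  obtain ⟨p, r, hpr⟩ := hA
  set q := linearODESeries p (X t₀)
  have hq : 0 < q.radius := linearODESeries_radius_pos p _ (hpr.r_pos.trans_le hpr.r_le)
  set Ψ : ℝ → R := fun t => q.sum (t - t₀)
  have hΨ : HasFPowerSeriesOnBall Ψ q t₀ q.radius := by
    have := (q.hasFPowerSeriesOnBall hq).comp_sub t₀
    rwa [zero_add] at this
  have hΨode : ∀ᶠ t in 𝓝 t₀, HasDerivAt Ψ (A t * Ψ t) t := by
    filter_upwards [Metric.eball_mem_nhds t₀ (lt_min hpr.r_pos hq)] with t ht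
    rw [Metric.mem_eball, edist_eq_enorm_sub, lt_min_iff] at ht
    have hA : A t = p.sum (t - t₀) := by
      simpa using hpr.sum (y := t - t₀) (by simpa using ht.1)
    rw [hA]
    exact (hasDerivAt_linearODESeries_sum p _ (ht.1.trans_le hpr.r_le) ht.2).comp_sub_const t t₀
  have h₀ : Ψ t₀ = X t₀ := by
    simp only [Ψ, sub_self]
    exact linearODESeries_sum_zero p _
  exact hΨ.analyticAt.congr (eventuallyEq_of_hasDerivAt_mul hpr.analyticAt.continuousAt hΨode hX h₀)

end LinearODE

theorem Matrix.analyticAt_of_hasDerivAt_mul {m : Type*} [Fintype m] [DecidableEq m]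
    {A Φ : ℝ → Matrix m m ℝ} {t₀ : ℝ} (hA : AnalyticAt ℝ A t₀)
    (hΦ : ∀ᶠ t in 𝓝 t₀, HasDerivAt Φ (A t * Φ t) t) : AnalyticAt ℝ Φ t₀ := by
  obtain ⟨e, he⟩ : ∃ e : Matrix m m ℝ ≃L[ℝ] (EuclideanSpace ℝ m →L[ℝ] EuclideanSpace ℝ m),
      ∀ M N, e (M * N) = e M * e N :=
    ⟨LinearEquiv.toContinuousLinearEquiv
        (Matrix.toEuclideanCLM (n := m) (𝕜 := ℝ)).toAlgEquiv.toLinearEquiv,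
      map_mul (Matrix.toEuclideanCLM (n := m) (𝕜 := ℝ))⟩
  have heA : AnalyticAt ℝ (fun t => e (A t)) t₀ :=
    e.toContinuousLinearMap.analyticAt _ |>.comp hA
  have heΦ : AnalyticAt ℝ (fun t => e (Φ t)) t₀ := by
    refine _root_.analyticAt_of_hasDerivAt_mul heA ?_
    filter_upwards [hΦ] with t ht
    have : HasDerivAt (fun t => e (Φ t)) (e (A t * Φ t)) t :=
      e.toContinuousLinearMap.hasFDerivAt.comp_hasDerivAt t ht
    rwa [he] at this
  have : AnalyticAt ℝ (fun t => e.symm (e (Φ t))) t₀ :=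
    e.symm.toContinuousLinearMap.analyticAt _ |>.comp heΦ
  simpa using this

theorem transition_matrix_analytic_general (n : ℕ) (a b : ℝ)
    (A : ℝ → Matrix (Fin n) (Fin n) ℝ)
    (hAan : AnalyticOnNhd ℝ A (Set.Ioo a b))
    (Φ : ℝ → Matrix (Fin n) (Fin n) ℝ)
    (hΦ : ∀ t ∈ Set.Icc a b, HasDerivWithinAt Φ (A t * Φ t) (Set.Icc a b) t) :
    AnalyticOnNhd ℝ Φ (Set.Ioo a b) := by
  intro t₀ ht₀
  refine Matrix.analyticAt_of_hasDerivAt_mul (hAan t₀ ht₀) ?_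
  filter_upwards [isOpen_Ioo.mem_nhds ht₀] with t ht
  exact (hΦ t (Set.Ioo_subset_Icc_self ht)).hasDerivAt (Icc_mem_nhds ht.1 ht.2)

/-- If `A : [a,b] → ℝ^{n×n}` is continuous and real analytic on `(a,b)`, then for each fixed
`τ ∈ [a,b]` the state transition matrix `t ↦ Φ(t,τ)`, defined by `∂ₜΦ(t,τ) = A(t)Φ(t,τ)` with
`Φ(τ,τ) = I`, is real analytic on `(a,b)`. -/
theorem transition_matrix_analytic (n : ℕ) (a b : ℝ)
    (A : ℝ → Matrix (Fin n) (Fin n) ℝ)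
    (hAc : ContinuousOn A (Set.Icc a b))
    (hAan : AnalyticOnNhd ℝ A (Set.Ioo a b))
    (τ : ℝ) (hτ : τ ∈ Set.Icc a b)
    (Φ : ℝ → Matrix (Fin n) (Fin n) ℝ)
    (hΦ : ∀ t ∈ Set.Icc a b, HasDerivWithinAt Φ (A t * Φ t) (Set.Icc a b) t)
    (hinit : Φ τ = 1) :
    AnalyticOnNhd ℝ Φ (Set.Ioo a b) :=
  transition_matrix_analytic_general n a b A hAan Φ hΦ
end
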